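/- Let Q ∈ ℝ^{n×n} be symmetric positive definite, let S ∈ ℝ^{r×n} be any matrix, let T_x ∈ ℝ^{n×n} and T_ν ∈ ℝ^{r×r} be diagonal positive definite, and let ε > 0. Then the regularized saddle-point system matrix A_reg = [[−T_x⁻¹Q, −T_x⁻¹Sᵀ], [T_ν⁻¹S, −ε T_ν⁻¹]] is Hurwitz, i.e., every complex eigenvalue of A_reg has strictly negative real part. -/

import Mathlib

open Matrix

/-! If `A_reg v = μ v` with `v ≠ 0`, multiply by `T = diag(T_x, T_ν)`: since
`T A_reg = -N` with `N = [[Q, Sᵀ], [-S, ε I]]`, we get `v* N v = -μ (v* T v)`. The number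
`v* T v` is real and positive, while the real part of `v* N v` is the real quadratic form of `N`
at `Re v` plus that at `Im v`; the skew off-diagonal blocks of `N` cancel in it, leaving the
positive definite `Q` and `ε I`. Hence `Re μ < 0`. -/

namespace Matrix

variable {m l : Type*} [Fintype m] [Fintype l]

theorem exists_mulVec_eq_smul_of_mem_spectrum {K : Type*} [Field K] [DecidableEq m]
    {A : Matrix m m K} {μ : K} (hμ : μ ∈ spectrum K A) : ∃ v ≠ 0, A *ᵥ v = μ • v := by
  rw [← spectrum_toLin', ← Module.End.hasEigenvalue_iff_mem_spectrum] at hμ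
  obtain ⟨v, hv, hv0⟩ := hμ.exists_hasEigenvector
  exact ⟨v, hv0, Module.End.mem_eigenspace_iff.mp hv⟩

theorem sumElim_dotProduct_fromBlocks_mulVec_sumElim {R : Type*} [CommRing R]
    (A : Matrix m m R) (B : Matrix m l R) {C : Matrix l m R} (D : Matrix l l R)
    (hC : C = -Bᵀ) (x : m → R) (y : l → R) :
    Sum.elim x y ⬝ᵥ fromBlocks A B C D *ᵥ Sum.elim x y = x ⬝ᵥ A *ᵥ x + y ⬝ᵥ D *ᵥ y := by
  have hcross : y ⬝ᵥ Bᵀ *ᵥ x = x ⬝ᵥ B *ᵥ y := by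
    rw [dotProduct_mulVec, vecMul_transpose, dotProduct_comm]
  rw [fromBlocks_mulVec, Sum.elim_comp_inl, Sum.elim_comp_inr, sumElim_dotProduct_sumElim,
    hC, neg_mulVec, dotProduct_add, dotProduct_add, dotProduct_neg, hcross]
  ring

theorem dotProduct_mulVec_nonneg_of_pos {M : Matrix m m ℝ} (hM : ∀ x ≠ 0, 0 < x ⬝ᵥ M *ᵥ x)
    (x : m → ℝ) : 0 ≤ x ⬝ᵥ M *ᵥ x := by
  rcases eq_or_ne x 0 with rfl | hx
  · simp
  · exact (hM x hx).le

theorem add_dotProduct_mulVec_pos {M : Matrix m m ℝ} {N : Matrix l l ℝ}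
    (hM : ∀ x ≠ 0, 0 < x ⬝ᵥ M *ᵥ x) (hN : ∀ y ≠ 0, 0 < y ⬝ᵥ N *ᵥ y) {x : m → ℝ} {y : l → ℝ}
    (hxy : x ≠ 0 ∨ y ≠ 0) : 0 < x ⬝ᵥ M *ᵥ x + y ⬝ᵥ N *ᵥ y := by
  rcases hxy with hx | hy
  · exact add_pos_of_pos_of_nonneg (hM x hx) (dotProduct_mulVec_nonneg_of_pos hN y)
  · exact add_pos_of_nonneg_of_pos (dotProduct_mulVec_nonneg_of_pos hM x) (hN y hy)

theorem fromBlocks_dotProduct_mulVec_pos {A : Matrix m m ℝ} {B : Matrix m l ℝ}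
    {C : Matrix l m ℝ} {D : Matrix l l ℝ} (hA : ∀ x ≠ 0, 0 < x ⬝ᵥ A *ᵥ x) (hC : C = -Bᵀ)
    (hD : ∀ y ≠ 0, 0 < y ⬝ᵥ D *ᵥ y) (z : m ⊕ l → ℝ) (hz : z ≠ 0) :
    0 < z ⬝ᵥ fromBlocks A B C D *ᵥ z := by
  rw [← Sum.elim_comp_inl_inr z, sumElim_dotProduct_fromBlocks_mulVec_sumElim A B D hC]
  refine add_dotProduct_mulVec_pos hA hD ?_
  by_contra! h
  exact hz (by rw [← Sum.elim_comp_inl_inr z, h.1, h.2]; exact Sum.elim_zero_zero)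

theorem PosDef.real_dotProduct_mulVec_pos {M : Matrix m m ℝ} (hM : M.PosDef) :
    ∀ x ≠ 0, 0 < x ⬝ᵥ M *ᵥ x :=
  fun x hx => by simpa using hM.dotProduct_mulVec_pos hx

theorem PosDef.fromBlocks_zero {A : Matrix m m ℝ} {D : Matrix l l ℝ} (hA : A.PosDef)
    (hD : D.PosDef) : (fromBlocks A 0 0 D).PosDef := by
  refine .of_dotProduct_mulVec_pos (hA.1.fromBlocks (by simp) hD.1) fun z hz => ?_
  simpa using fromBlocks_dotProduct_mulVec_pos hA.real_dotProduct_mulVec_pos (by simp)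
    hD.real_dotProduct_mulVec_pos z hz

theorem re_star_dotProduct_map_ofReal_mulVec (M : Matrix m m ℝ) (v : m → ℂ) :
    (star v ⬝ᵥ M.map Complex.ofReal *ᵥ v).re
      = (fun i => (v i).re) ⬝ᵥ M *ᵥ (fun i => (v i).re)
        + (fun i => (v i).im) ⬝ᵥ M *ᵥ (fun i => (v i).im) := by
  simp only [dotProduct, mulVec, map_apply, Pi.star_apply, Complex.re_sum, Finset.mul_sum,
    ← Finset.sum_add_distrib]
  refine Finset.sum_congr rfl fun i _ => Finset.sum_congr rfl fun j _ => ?_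
  simp only [Complex.mul_re, Complex.mul_im, Complex.star_def, Complex.conj_re, Complex.conj_im,
    Complex.ofReal_re, Complex.ofReal_im]
  ring

theorem re_star_dotProduct_map_ofReal_mulVec_pos {M : Matrix m m ℝ}
    (hM : ∀ x ≠ 0, 0 < x ⬝ᵥ M *ᵥ x) {v : m → ℂ} (hv : v ≠ 0) :
    0 < (star v ⬝ᵥ M.map Complex.ofReal *ᵥ v).re := by
  rw [re_star_dotProduct_map_ofReal_mulVec]
  refine add_dotProduct_mulVec_pos hM hM ?_
  by_contra! h
  exact hv (funext fun i => Complex.ext (congrFun h.1 i) (congrFun h.2 i))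

theorem re_lt_zero_of_mem_spectrum_map_ofReal [DecidableEq m] {T A N : Matrix m m ℝ}
    (hT : T.PosDef) (hN : ∀ x ≠ 0, 0 < x ⬝ᵥ N *ᵥ x) (hTA : T * A = -N) {μ : ℂ}
    (hμ : μ ∈ spectrum ℂ (A.map Complex.ofReal)) : μ.re < 0 := by
  obtain ⟨v, hv, hAv⟩ := exists_mulVec_eq_smul_of_mem_spectrum hμ
  set t := star v ⬝ᵥ T.map Complex.ofReal *ᵥ v
  have hNmap : -N.map Complex.ofReal = T.map Complex.ofReal * A.map Complex.ofReal := by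
    rw [← Matrix.map_neg _ Complex.ofReal_neg, ← hTA]
    exact Matrix.map_mul (f := Complex.ofRealHom)
  have hNv : -(star v ⬝ᵥ N.map Complex.ofReal *ᵥ v) = μ * t := by
    rw [← dotProduct_neg, ← neg_mulVec, hNmap, ← mulVec_mulVec, hAv, mulVec_smul, dotProduct_smul,
      smul_eq_mul]
  have ht_im : t.im = 0 :=
    (hT.1.map _ fun x => by simp).im_star_dotProduct_mulVec_self v
  have ht_re : 0 < t.re := re_star_dotProduct_map_ofReal_mulVec_pos
    hT.real_dotProduct_mulVec_pos hv
  have hμt : (μ * t).re < 0 := by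
    rw [← hNv, Complex.neg_re, neg_lt_zero]
    exact re_star_dotProduct_map_ofReal_mulVec_pos hN hv
  rw [Complex.mul_re, ht_im, mul_zero, sub_zero] at hμt
  exact neg_of_mul_neg_left hμt ht_re.le

end Matrix

theorem regularized_saddle_point_matrix_hurwitz_general
    (n r : ℕ)
    (Q : Matrix (Fin n) (Fin n) ℝ) (hQ : Q.PosDef)
    (S : Matrix (Fin r) (Fin n) ℝ)
    (Tx : Matrix (Fin n) (Fin n) ℝ) (hTx : Tx.PosDef)
    (Tν : Matrix (Fin r) (Fin r) ℝ) (hTν : Tν.PosDef)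
    (ε : ℝ) (hε : 0 < ε) :
    ∀ μ ∈ spectrum ℂ
        ((Matrix.fromBlocks (-(Tx⁻¹ * Q)) (-(Tx⁻¹ * Sᵀ)) (Tν⁻¹ * S)
          (-(ε • Tν⁻¹))).map Complex.ofReal),
      μ.re < 0 := by
  intro μ hμ
  have hTx_det : IsUnit Tx.det := hTx.det_pos.ne'.isUnit
  have hTν_det : IsUnit Tν.det := hTν.det_pos.ne'.isUnit
  have hTA : fromBlocks Tx 0 0 Tν * fromBlocks (-(Tx⁻¹ * Q)) (-(Tx⁻¹ * Sᵀ)) (Tν⁻¹ * S)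
      (-(ε • Tν⁻¹)) = -fromBlocks Q Sᵀ (-S) (ε • 1) := by
    simp [fromBlocks_multiply, fromBlocks_neg, mul_nonsing_inv_cancel_left _ _ hTx_det,
      mul_nonsing_inv_cancel_left _ _ hTν_det, mul_nonsing_inv _ hTν_det]
  refine re_lt_zero_of_mem_spectrum_map_ofReal (hTx.fromBlocks_zero hTν) ?_ hTA hμ
  exact fromBlocks_dotProduct_mulVec_pos hQ.real_dotProduct_mulVec_pos
    (by rw [transpose_transpose]) (PosDef.one.smul hε).real_dotProduct_mulVec_pos

/-- The regularized saddle-point system matrix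
`A_reg = [[−Tx⁻¹Q, −Tx⁻¹Sᵀ], [Tν⁻¹S, −ε Tν⁻¹]]` is Hurwitz. -/
theorem regularized_saddle_point_matrix_hurwitz
    (n r : ℕ)
    (Q : Matrix (Fin n) (Fin n) ℝ) (hQ : Q.PosDef)
    (S : Matrix (Fin r) (Fin n) ℝ)
    (Tx : Matrix (Fin n) (Fin n) ℝ) (hTxd : Tx.IsDiag) (hTx : Tx.PosDef)
    (Tν : Matrix (Fin r) (Fin r) ℝ) (hTνd : Tν.IsDiag) (hTν : Tν.PosDef)
    (ε : ℝ) (hε : 0 < ε) :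
    ∀ μ ∈ spectrum ℂ
        ((Matrix.fromBlocks (-(Tx⁻¹ * Q)) (-(Tx⁻¹ * Sᵀ)) (Tν⁻¹ * S)
          (-(ε • Tν⁻¹))).map Complex.ofReal),
      μ.re < 0 :=
  regularized_saddle_point_matrix_hurwitz_general n r Q hQ S Tx hTx Tν hTν ε hε
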